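/- Let D[uⁿ] = (3/2)uⁿ − 2u^{n−1} + (1/2)u^{n−2} and I[uⁿ] = (3/2)uⁿ − u^{n−1} + (1/2)u^{n−2}. If ρⁿ = ûⁿ − (1/3)(ûⁿ − 2ρ^{n−1} + ρ^{n−2}) (time filter with γ = 2/3), then ûⁿ = I[ρⁿ] where I is taken on the sequence (ρⁿ); equivalently I[ρⁿ] = (3/2)ρⁿ − ρ^{n−1} + (1/2)ρ^{n−2} satisfies the filter relation, so the two-step backward-Euler-plus-filter scheme is algebraically equivalent to the one-step scheme with D and I. -/
import Mathlib


theorem time_filter_equivalence {V : Type*} [AddCommGroup V] [Module ℝ V]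
    (ρ uhat : ℕ → V)
    (hfilter : ∀ n, 2 ≤ n →
      ρ n = uhat n - (1/3 : ℝ) • (uhat n - (2:ℝ) • ρ (n-1) + ρ (n-2))) :
    ∀ n, 2 ≤ n →
      uhat n = (3/2 : ℝ) • ρ n - ρ (n-1) + (1/2 : ℝ) • ρ (n-2) ∧
      uhat n - ρ (n-1) =
        (3/2 : ℝ) • ρ n - (2:ℝ) • ρ (n-1) + (1/2 : ℝ) • ρ (n-2) := by
  intro n hn
  have h := hfilter n hn
  have h1 : uhat n = (3/2 : ℝ) • ρ n - ρ (n-1) + (1/2 : ℝ) • ρ (n-2) := by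
    have := congrArg (fun x => (3/2 : ℝ) • x) h
    simp only [smul_sub, smul_add, smul_smul] at this
    rw [this]
    module
  refine ⟨h1, ?_⟩
  rw [h1]
  module
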